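/- Assume β > 0 and let δ ∈ (0,1] satisfy (max_{1≤i≤m} γ_i/μ_i - 1)⁺ δ ≤ 1. Then for every p > 1, every x ∈ K₊, and every u ∈ Δ, ⟨b(x,u), ∇V_p(x)⟩ ≤ -p (β/m - δβ - δ m/2 + δ‖x⁻‖₁) V_{p-1}(x), where ‖x⁻‖₁ = ∑_i max(-x_i, 0). -/

import Mathlib

/-!
Write `V_p = Φ^p` with `Φ(x) = ∑ φ(x_i)/μ_i + m / min μ` and `φ(t) = δψ(-t) + ψ(t)`. Since
`ψ ≥ -1/2` and `δ ≤ 1`, `φ ≥ -1`, so `Φ ≥ 0`, and `⟨b, ∇V_p⟩ = p Φ^{p-1} ⟨b, ∇Φ⟩`. With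
`h_i = φ'(x_i) ∈ [-δ, 1]` and `s = ∑ x_i > 0`,
`⟨b, ∇Φ⟩ = -(β/m) ∑ h_i - ∑ h_i x_i + s ∑ u_i h_i (1 - γ_i/μ_i)`.
Some `x_j > 0`, where `h_j ≥ 1 - δ`, so `∑ h_i ≥ 1 - mδ`; pointwise
`x_i (1 - h_i) ≤ δ/2 - δ x_i⁻`; and the condition on `δ` gives `h_i (1 - γ_i/μ_i) ≤ 1`, so the
last term is at most `s`, which cancels against `∑ x_i (1 - h_i) = s - ∑ h_i x_i`.
-/

open scoped BigOperators

noncomputable section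

/-- The piecewise function `ψ` from Definition 1 of the paper. -/
def psi (t : ℝ) : ℝ :=
  if t ≤ -1 then -(1/2)
  else if t ≤ 0 then (t+1)^3 - (1/2)*(t+1)^4 - 1/2
  else t

/-- `Ψ(x) = ∑ i, ψ(x_i)/μ_i`. -/
def Psi (m : ℕ) (μ : Fin m → ℝ) (x : Fin m → ℝ) : ℝ := ∑ i, psi (x i) / μ i

/-- The Lyapunov function `V_p(x) = (δ Ψ(-x) + Ψ(x) + m / min_i μ_i)^p`. -/
def Vp (m : ℕ) (μ : Fin m → ℝ) (δ p : ℝ) (x : Fin m → ℝ) : ℝ :=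
  (δ * Psi m μ (-x) + Psi m μ x + (m : ℝ) / ⨅ i, μ i) ^ p

/-- The drift `b(x,u) = -(β/m) M e - M (x - ⟨e,x⟩⁺ u) - ⟨e,x⟩⁺ Γ u`, written
componentwise, where `M = diag(μ)` and `Γ = diag(γ)`. -/
def drift (m : ℕ) (μ γ : Fin m → ℝ) (β : ℝ) (x u : Fin m → ℝ) : Fin m → ℝ :=
  fun i => -(β / (m : ℝ)) * μ i - μ i * (x i - max (∑ j, x j) 0 * u i)
    - max (∑ j, x j) 0 * (γ i * u i)

open Set Filter

theorem hasDerivAt_ite_le {g k g' k' : ℝ → ℝ} {a : ℝ}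
    (hg : ∀ t, HasDerivAt g (g' t) t) (hk : ∀ t, HasDerivAt k (k' t) t)
    (ha : g a = k a) (ha' : g' a = k' a) (t : ℝ) :
    HasDerivAt (fun s => if s ≤ a then g s else k s) (if t ≤ a then g' t else k' t) t := by
  rcases lt_trichotomy t a with ht | rfl | ht
  · rw [if_pos ht.le]
    refine (hg t).congr_of_eventuallyEq ?_
    filter_upwards [Iio_mem_nhds ht] with s hs
    exact if_pos (le_of_lt hs)
  · rw [if_pos le_rfl]
    have hl : HasDerivWithinAt (fun s => if s ≤ t then g s else k s) (g' t) (Iic t) t :=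
      (hg t).hasDerivWithinAt.congr (fun s hs => if_pos hs) (if_pos le_rfl)
    have hr : HasDerivWithinAt (fun s => if s ≤ t then g s else k s) (g' t) (Ici t) t := by
      refine ha' ▸ (hk t).hasDerivWithinAt.congr (fun s hs => ?_) (by simp [ha])
      rcases (mem_Ici.1 hs).eq_or_lt with rfl | hs
      · simp [ha]
      · exact if_neg (not_le.2 hs)
    simpa [Iic_union_Ici] using hl.union hr
  · rw [if_neg (not_le.2 ht)]
    refine (hk t).congr_of_eventuallyEq ?_
    filter_upwards [Ioi_mem_nhds ht] with s hs
    exact if_neg (not_le.2 hs)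

def psiDeriv (t : ℝ) : ℝ :=
  if t ≤ -1 then 0
  else if t ≤ 0 then 3*(t+1)^2 - 2*(t+1)^3
  else 1

theorem hasDerivAt_psi (t : ℝ) : HasDerivAt psi (psiDeriv t) t := by
  have hpoly : ∀ s : ℝ, HasDerivAt (fun r : ℝ => (r+1)^3 - (1/2)*(r+1)^4 - 1/2)
      (3*(s+1)^2 - 2*(s+1)^3) s := fun s => by
    have h := ((((hasDerivAt_id' s).add_const 1).fun_pow 3).fun_sub
      ((((hasDerivAt_id' s).add_const 1).fun_pow 4).const_mul (1/2))).sub_const (1/2)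
    exact h.congr_deriv (by norm_num; ring)
  have hright : ∀ s : ℝ, HasDerivAt
      (fun r : ℝ => if r ≤ 0 then (r+1)^3 - (1/2)*(r+1)^4 - 1/2 else r)
      (if s ≤ 0 then 3*(s+1)^2 - 2*(s+1)^3 else 1) s :=
    hasDerivAt_ite_le hpoly (fun s => hasDerivAt_id s) (by norm_num) (by norm_num)
  exact hasDerivAt_ite_le (fun s => hasDerivAt_const s (-(1/2))) hright (by norm_num)
    (by norm_num) t

theorem neg_half_le_psi (t : ℝ) : -(1/2) ≤ psi t := by
  unfold psi
  split_ifs with h₁ h₂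
  · rfl
  · nlinarith [mul_nonneg (pow_nonneg (by linarith : (0:ℝ) ≤ t+1) 3)
      (by linarith : (0:ℝ) ≤ 2 - (t+1))]
  · linarith

theorem psiDeriv_nonneg (t : ℝ) : 0 ≤ psiDeriv t := by
  unfold psiDeriv
  split_ifs with h₁ h₂
  · rfl
  · nlinarith [mul_nonneg (sq_nonneg (t+1)) (by linarith : (0:ℝ) ≤ 1 - 2*t)]
  · exact zero_le_one

theorem psiDeriv_le_one (t : ℝ) : psiDeriv t ≤ 1 := by
  unfold psiDeriv
  split_ifs with h₁ h₂
  · exact zero_le_one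
  · nlinarith [mul_nonneg (sq_nonneg t) (by linarith : (0:ℝ) ≤ 2*t + 3)]
  · rfl

theorem psiDeriv_of_nonneg {t : ℝ} (ht : 0 ≤ t) : psiDeriv t = 1 := by
  unfold psiDeriv
  split_ifs with h₁ h₂
  · linarith
  · obtain rfl : t = 0 := le_antisymm h₂ ht
    norm_num
  · rfl

/-- For `t ∈ [0, 1]` this is `t (1 - t)² (1 + 2t) ≤ 1/2`. -/
theorem psiDeriv_neg_mul_le {t : ℝ} (ht : 0 ≤ t) : psiDeriv (-t) * t ≤ 1/2 := by
  unfold psiDeriv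
  split_ifs with h₁ h₂
  · linarith
  · have ht1 : t < 1 := by linarith
    nlinarith [mul_nonneg ht (sq_nonneg (1-t)), mul_nonneg (mul_nonneg ht ht) ht,
      mul_nonneg (mul_nonneg ht (sub_nonneg.2 ht1.le)) (sub_nonneg.2 ht1.le)]
  · linarith

def phi (δ t : ℝ) : ℝ := δ * psi (-t) + psi t

def phiDeriv (δ t : ℝ) : ℝ := psiDeriv t - δ * psiDeriv (-t)

theorem hasDerivAt_phi (δ t : ℝ) : HasDerivAt (phi δ) (phiDeriv δ t) t := by
  have hneg : HasDerivAt (fun s => psi (-s)) (-psiDeriv (-t)) t := by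
    simpa [Function.comp_def] using (hasDerivAt_psi (-t)).comp t (hasDerivAt_neg t)
  exact ((hneg.const_mul δ).add (hasDerivAt_psi t)).congr_deriv (by simp [phiDeriv]; ring)

theorem neg_one_le_phi {δ : ℝ} (hδ₀ : 0 ≤ δ) (hδ₁ : δ ≤ 1) (t : ℝ) : -1 ≤ phi δ t := by
  unfold phi
  nlinarith [neg_half_le_psi t, neg_half_le_psi (-t)]

theorem neg_le_phiDeriv {δ : ℝ} (hδ : 0 ≤ δ) (t : ℝ) : -δ ≤ phiDeriv δ t := by
  unfold phiDeriv
  nlinarith [psiDeriv_nonneg t, psiDeriv_le_one (-t)]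

theorem phiDeriv_le_one {δ : ℝ} (hδ : 0 ≤ δ) (t : ℝ) : phiDeriv δ t ≤ 1 := by
  unfold phiDeriv
  nlinarith [psiDeriv_le_one t, psiDeriv_nonneg (-t)]

theorem one_sub_le_phiDeriv {δ t : ℝ} (hδ : 0 ≤ δ) (ht : 0 ≤ t) : 1 - δ ≤ phiDeriv δ t := by
  rw [phiDeriv, psiDeriv_of_nonneg ht]
  nlinarith [psiDeriv_le_one (-t)]

theorem mul_one_sub_phiDeriv_le {δ : ℝ} (hδ : 0 ≤ δ) (t : ℝ) :
    t * (1 - phiDeriv δ t) ≤ δ/2 - δ * max (-t) 0 := by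
  rcases le_or_gt 0 t with ht | ht
  · rw [phiDeriv, psiDeriv_of_nonneg ht, max_eq_right (by linarith)]
    nlinarith [mul_le_mul_of_nonneg_left (psiDeriv_neg_mul_le ht) hδ]
  · rw [phiDeriv, psiDeriv_of_nonneg (neg_nonneg.2 ht.le), max_eq_left (by linarith)]
    nlinarith [psiDeriv_le_one t]

section Lyapunov

variable {m : ℕ} {μ : Fin m → ℝ} {δ : ℝ}

def Phi (m : ℕ) (μ : Fin m → ℝ) (δ : ℝ) (x : Fin m → ℝ) : ℝ :=
  δ * Psi m μ (-x) + Psi m μ x + (m : ℝ) / ⨅ i, μ i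

theorem Phi_eq_sum (x : Fin m → ℝ) :
    Phi m μ δ x = ∑ i, phi δ (x i) / μ i + (m : ℝ) / ⨅ i, μ i := by
  simp only [Phi, Psi, phi, Pi.neg_apply, Finset.mul_sum, ← Finset.sum_add_distrib, add_div,
    mul_div_assoc]

theorem Phi_nonneg (hμ : ∀ i, 0 < μ i) (hδ₀ : 0 ≤ δ) (hδ₁ : δ ≤ 1) (x : Fin m → ℝ) :
    0 ≤ Phi m μ δ x := by
  have hconst : (m : ℝ) / ⨅ i, μ i = ∑ _i : Fin m, 1 / ⨅ i, μ i := by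
    simp [div_eq_mul_inv]
  rw [Phi_eq_sum, hconst, ← Finset.sum_add_distrib]
  refine Finset.sum_nonneg fun i _ => ?_
  have : Nonempty (Fin m) := ⟨i⟩
  obtain ⟨k, hk⟩ := exists_eq_ciInf_of_finite (f := μ)
  have hinf : 0 < ⨅ i, μ i := hk ▸ hμ k
  have hphi : -1 / μ i ≤ phi δ (x i) / μ i :=
    div_le_div_of_nonneg_right (neg_one_le_phi hδ₀ hδ₁ _) (hμ i).le
  have hmin : 1 / μ i ≤ 1 / ⨅ i, μ i :=
    one_div_le_one_div_of_le hinf (ciInf_le (Finite.bddBelow_range μ) i)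
  have : -1 / μ i + 1 / μ i = 0 := by ring
  linarith

theorem hasFDerivAt_Phi (x : Fin m → ℝ) :
    HasFDerivAt (Phi m μ δ)
      (∑ i, (phiDeriv δ (x i) / μ i) •
        ContinuousLinearMap.proj (R := ℝ) (φ := fun _ : Fin m => ℝ) i) x := by
  have hterm : ∀ i, HasFDerivAt (fun y : Fin m → ℝ => phi δ (y i) / μ i)
      ((phiDeriv δ (x i) / μ i) •
        ContinuousLinearMap.proj (R := ℝ) (φ := fun _ : Fin m => ℝ) i) x :=
    fun i => by
      exact ((hasDerivAt_phi δ (x i)).div_const (μ i)).comp_hasFDerivAt x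
        (ContinuousLinearMap.proj (R := ℝ) (φ := fun _ : Fin m => ℝ) i).hasFDerivAt
  have hsum := (HasFDerivAt.sum fun i (_ : i ∈ Finset.univ) => hterm i).add_const
    ((m : ℝ) / ⨅ i, μ i)
  exact hsum.congr_of_eventuallyEq (Eventually.of_forall fun y => by simp [Phi_eq_sum])

theorem fderiv_Vp_apply {p : ℝ} (hp : 1 ≤ p) (x v : Fin m → ℝ) :
    fderiv ℝ (Vp m μ δ p) x v
      = p * Vp m μ δ (p - 1) x * ∑ i, phiDeriv δ (x i) / μ i * v i := by
  have hV : HasFDerivAt (Vp m μ δ p) _ x :=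
    (Real.hasDerivAt_rpow_const (Or.inr hp)).comp_hasFDerivAt x (hasFDerivAt_Phi x)
  rw [hV.fderiv]
  simp only [_root_.smul_apply, _root_.sum_apply, ContinuousLinearMap.proj_apply, smul_eq_mul]
  rfl

end Lyapunov

section Drift

variable {m : ℕ} {μ γ : Fin m → ℝ} {β δ : ℝ}

theorem sum_div_mul_drift (hμ : ∀ i, μ i ≠ 0) (h x u : Fin m → ℝ) :
    ∑ i, h i / μ i * drift m μ γ β x u i
      = -(β / m) * ∑ i, h i - ∑ i, h i * x i
        + max (∑ j, x j) 0 * ∑ i, u i * (h i * (1 - γ i / μ i)) := by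
  simp only [drift, Finset.mul_sum, ← Finset.sum_sub_distrib, ← Finset.sum_add_distrib]
  refine Finset.sum_congr rfl fun i _ => ?_
  field_simp [hμ i]
  ring

theorem one_sub_mul_le_sum {h : Fin m → ℝ} (hlow : ∀ i, -δ ≤ h i) {j : Fin m}
    (hj : 1 - δ ≤ h j) : 1 - m * δ ≤ ∑ i, h i := by
  have := Finset.single_le_sum (f := fun i => h i + δ) (fun i _ => by linarith [hlow i])
    (Finset.mem_univ j)
  simp only [Finset.sum_add_distrib, Finset.sum_const, Finset.card_univ, Fintype.card_fin,
    nsmul_eq_mul] at this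
  linarith

theorem mul_one_sub_le_one {h r : ℝ} (hlow : -δ ≤ h) (hup : h ≤ 1) (hr : 0 ≤ r)
    (hrδ : (r - 1) * δ ≤ 1) : h * (1 - r) ≤ 1 := by
  rcases le_total r 1 with hr1 | hr1 <;> nlinarith

theorem sum_phiDeriv_div_mul_drift_le (hμ : ∀ i, 0 < μ i) (hγ : ∀ i, 0 ≤ γ i) (hβ : 0 ≤ β)
    (hδ : 0 ≤ δ) (hδγ : max ((⨆ i, γ i / μ i) - 1) 0 * δ ≤ 1)
    {x u : Fin m → ℝ} (hx : 0 < ∑ i, x i) (hu₀ : ∀ i, 0 ≤ u i) (hu₁ : ∑ i, u i = 1) :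
    ∑ i, phiDeriv δ (x i) / μ i * drift m μ γ β x u i
      ≤ -(β / m - δ * β - δ * m / 2 + δ * ∑ i, max (-(x i)) 0) := by
  obtain ⟨j, -, hj⟩ := Finset.exists_lt_of_sum_lt (s := Finset.univ) (f := fun _ => (0 : ℝ))
    (g := x) (by simpa using hx)
  have hm : (0 : ℝ) < m := Nat.cast_pos.2 (Fin.pos j)
  rw [sum_div_mul_drift (fun i => (hμ i).ne'), max_eq_left hx.le]
  have hsum : 1 - m * δ ≤ ∑ i, phiDeriv δ (x i) :=
    one_sub_mul_le_sum (fun i => neg_le_phiDeriv hδ (x i)) (one_sub_le_phiDeriv hδ hj.le)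
  have hdrift : -(β / m) * ∑ i, phiDeriv δ (x i) ≤ -(β / m) + δ * β := by
    have := mul_le_mul_of_nonpos_left hsum (neg_nonpos.2 (div_nonneg hβ hm.le))
    field_simp at this ⊢
    linarith
  have hlin : ∑ i, x i * (1 - phiDeriv δ (x i)) ≤ m * (δ / 2) - δ * ∑ i, max (-(x i)) 0 :=
    calc ∑ i, x i * (1 - phiDeriv δ (x i)) ≤ ∑ i, (δ / 2 - δ * max (-(x i)) 0) :=
          Finset.sum_le_sum fun i _ => mul_one_sub_phiDeriv_le hδ (x i)
      _ = m * (δ / 2) - δ * ∑ i, max (-(x i)) 0 := by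
          simp [Finset.sum_sub_distrib, Finset.mul_sum]
  have hctrl : ∑ i, u i * (phiDeriv δ (x i) * (1 - γ i / μ i)) ≤ 1 :=
    calc ∑ i, u i * (phiDeriv δ (x i) * (1 - γ i / μ i)) ≤ ∑ i, u i * 1 := by
          refine Finset.sum_le_sum fun i _ => mul_le_mul_of_nonneg_left ?_ (hu₀ i)
          refine mul_one_sub_le_one (neg_le_phiDeriv hδ _) (phiDeriv_le_one hδ _)
            (div_nonneg (hγ i) (hμ i).le) (le_trans ?_ hδγ)
          refine mul_le_mul_of_nonneg_right (le_max_of_le_left ?_) hδ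
          exact sub_le_sub_right (le_ciSup (Finite.bddAbove_range fun k => γ k / μ k) i) 1
      _ = 1 := by simp [hu₁]
  have hx_mul : ∑ i, x i * (1 - phiDeriv δ (x i)) = ∑ i, x i - ∑ i, phiDeriv δ (x i) * x i := by
    simp only [mul_one_sub, Finset.sum_sub_distrib, mul_comm]
  linarith [mul_le_mul_of_nonneg_left hctrl hx.le]

end Drift

theorem stmt_6_general (m : ℕ) (μ γ : Fin m → ℝ)
    (hμ : ∀ i, 0 < μ i) (hγ : ∀ i, 0 ≤ γ i)
    (β : ℝ) (hβ : 0 < β)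
    (δ : ℝ) (hδ0 : 0 < δ) (hδ1 : δ ≤ 1)
    (hδγ : max ((⨆ i, γ i / μ i) - 1) 0 * δ ≤ 1)
    (p : ℝ) (hp : 1 < p)
    (x : Fin m → ℝ) (hx : 0 < ∑ i, x i)
    (u : Fin m → ℝ) (hu0 : ∀ i, 0 ≤ u i) (hu1 : ∑ i, u i = 1) :
    fderiv ℝ (Vp m μ δ p) x (drift m μ γ β x u) ≤
      -(p * (β / (m : ℝ) - δ * β - δ * (m : ℝ) / 2 + δ * ∑ i, max (-(x i)) 0)
        * Vp m μ δ (p - 1) x) := by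
  have hV : 0 ≤ p * Vp m μ δ (p - 1) x :=
    mul_nonneg (by linarith) (Real.rpow_nonneg (Phi_nonneg hμ hδ0.le hδ1 x) _)
  rw [fderiv_Vp_apply hp.le]
  calc p * Vp m μ δ (p - 1) x * ∑ i, phiDeriv δ (x i) / μ i * drift m μ γ β x u i
      ≤ p * Vp m μ δ (p - 1) x * -(β / m - δ * β - δ * m / 2 + δ * ∑ i, max (-(x i)) 0) :=
        mul_le_mul_of_nonneg_left
          (sum_phiDeriv_div_mul_drift_le hμ hγ hβ.le hδ0.le hδγ hx hu0 hu1) hV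
    _ = _ := by ring

/-- Lemma 1, inequality on `K₊`: for `β > 0`, admissible `δ`, `p > 1`, `x ∈ K₊`,
`u ∈ Δ`: `⟨b(x,u), ∇V_p(x)⟩ ≤ -p (β/m - δβ - δm/2 + δ‖x⁻‖₁) V_{p-1}(x)`. -/
theorem stmt_6 (m : ℕ) (hm : 1 ≤ m) (μ γ : Fin m → ℝ)
    (hμ : ∀ i, 0 < μ i) (hγ : ∀ i, 0 ≤ γ i)
    (β : ℝ) (hβ : 0 < β)
    (δ : ℝ) (hδ0 : 0 < δ) (hδ1 : δ ≤ 1)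
    (hδγ : max ((⨆ i, γ i / μ i) - 1) 0 * δ ≤ 1)
    (p : ℝ) (hp : 1 < p)
    (x : Fin m → ℝ) (hx : 0 < ∑ i, x i)
    (u : Fin m → ℝ) (hu0 : ∀ i, 0 ≤ u i) (hu1 : ∑ i, u i = 1) :
    fderiv ℝ (Vp m μ δ p) x (drift m μ γ β x u) ≤
      -(p * (β / (m : ℝ) - δ * β - δ * (m : ℝ) / 2 + δ * ∑ i, max (-(x i)) 0)
        * Vp m μ δ (p - 1) x) :=
  stmt_6_general m μ γ hμ hγ β hβ δ hδ0 hδ1 hδγ p hp x hx u hu0 hu1
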